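/- arXiv:gr-qc/9811031 — 2 statements merged into one kernel-verified Lean document; each statement's English description precedes it below -/
import Mathlib

section
/- Let K, K' : ℝⁿ → ℝⁿ be smooth vector fields, each satisfying the flat Killing equation for η, i.e. ∂_a K_b + ∂_b K_a = 0 and ∂_a K'_b + ∂_b K'_a = 0 at every point (where K_b := Σ_c η_{bc} K^c). If K(0) = K'(0) and the total derivatives of K and K' at 0 coincide, then K = K' everywhere on ℝⁿ. (Flat-space form of the paper's principle that a Killing vector field is uniquely determined by its initial data [K^a].) -/
/-- Partial derivative of a scalar field on ℝⁿ in the `a`-th coordinate direction. -/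
noncomputable def pd {n : ℕ} (a : Fin n) (u : (Fin n → ℝ) → ℝ) : (Fin n → ℝ) → ℝ :=
  fun x => fderiv ℝ u x (Pi.single a 1)

/-- Covariant components `K_b := Σ_c η_{bc} K^c` of a vector field. -/
noncomputable def cov {n : ℕ} (η : Matrix (Fin n) (Fin n) ℝ)
    (K : (Fin n → ℝ) → (Fin n → ℝ)) (b : Fin n) : (Fin n → ℝ) → ℝ :=
  fun x => ∑ c, η b c * K x c

namespace FlatKillingAux

variable {n : ℕ}

/-- A continuous linear functional on `ℝⁿ` vanishing on the basis is zero. -/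
lemma clm_eq_zero_of_single {L : (Fin n → ℝ) →L[ℝ] ℝ}
    (h : ∀ a, L (Pi.single a 1) = 0) : L = 0 := by
  ext x
  have hx : x = ∑ a, x a • (Pi.single a 1 : Fin n → ℝ) := by
    funext j
    simp [Finset.sum_apply, Pi.single_apply]
  have : L x = L (∑ a, x a • (Pi.single a 1 : Fin n → ℝ)) := by rw [← hx]
  simp [this, h]

/-- The covariant-components map as a continuous linear functional. -/
noncomputable def covL (η : Matrix (Fin n) (Fin n) ℝ) (b : Fin n) :
    (Fin n → ℝ) →L[ℝ] ℝ :=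
  ∑ c, η b c • ContinuousLinearMap.proj c

lemma cov_eq (η : Matrix (Fin n) (Fin n) ℝ) (K : (Fin n → ℝ) → (Fin n → ℝ)) (b : Fin n) :
    cov η K b = fun x => covL η b (K x) := by
  funext x
  simp [cov, covL, ContinuousLinearMap.sum_apply]

lemma contDiff_cov {η : Matrix (Fin n) (Fin n) ℝ} {K : (Fin n → ℝ) → (Fin n → ℝ)}
    (hK : ContDiff ℝ (⊤ : ℕ∞) K) (b : Fin n) : ContDiff ℝ (⊤ : ℕ∞) (cov η K b) := by
  rw [cov_eq]
  exact (covL η b).contDiff.comp hK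

lemma fderiv_cov {η : Matrix (Fin n) (Fin n) ℝ} {K : (Fin n → ℝ) → (Fin n → ℝ)}
    (hK : ContDiff ℝ (⊤ : ℕ∞) K) (b : Fin n) (x : Fin n → ℝ) :
    fderiv ℝ (cov η K b) x = (covL η b).comp (fderiv ℝ K x) := by
  rw [cov_eq]
  exact ((covL η b).hasFDerivAt.comp x
    ((hK.differentiable (by simp) x).hasFDerivAt)).fderiv

lemma contDiff_pd {u : (Fin n → ℝ) → ℝ} (hu : ContDiff ℝ (⊤ : ℕ∞) u) (a : Fin n) :
    ContDiff ℝ (⊤ : ℕ∞) (pd a u) := by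
  have : ContDiff ℝ (⊤ : ℕ∞) (fderiv ℝ u) := hu.fderiv_right (by simp)
  exact this.clm_apply contDiff_const

lemma pd_sub {f g : (Fin n → ℝ) → ℝ} (hf : Differentiable ℝ f) (hg : Differentiable ℝ g)
    (a : Fin n) (x : Fin n → ℝ) :
    pd a (fun y => f y - g y) x = pd a f x - pd a g x := by
  simp [pd, fderiv_fun_sub (hf x) (hg x)]

lemma pd_neg {f : (Fin n → ℝ) → ℝ} (a : Fin n) (x : Fin n → ℝ) :
    pd a (fun y => -f y) x = - pd a f x := by
  simp [pd, fderiv_neg]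

/-- Second partial derivatives of smooth functions commute. -/
lemma pd_comm {u : (Fin n → ℝ) → ℝ} (hu : ContDiff ℝ (⊤ : ℕ∞) u) (a b : Fin n) (x : Fin n → ℝ) :
    pd a (pd b u) x = pd b (pd a u) x := by
  have hd : Differentiable ℝ u := hu.differentiable (by simp)
  have hd' : Differentiable ℝ (fderiv ℝ u) :=
    (hu.fderiv_right (m := (⊤ : ℕ∞)) (by simp)).differentiable (by simp)
  have key : ∀ v w, fderiv ℝ (fun y => fderiv ℝ u y v) x w
      = fderiv ℝ (fderiv ℝ u) x w v := by
    intro v w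
    rw [fderiv_clm_apply (hd' x) (differentiableAt_const v)]
    simp
  have hsymm := second_derivative_symmetric (f := u) (f' := fderiv ℝ u)
    (f'' := fderiv ℝ (fderiv ℝ u) x) (fun y => (hd y).hasFDerivAt)
    ((hd' x).hasFDerivAt) (Pi.single a 1) (Pi.single b 1)
  show fderiv ℝ (fun y => fderiv ℝ u y (Pi.single b 1)) x (Pi.single a 1)
      = fderiv ℝ (fun y => fderiv ℝ u y (Pi.single a 1)) x (Pi.single b 1)
  rw [key, key, hsymm]

end FlatKillingAux

open FlatKillingAux in
/-- Two smooth flat η-Killing fields with the same value and total derivative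
at the origin coincide everywhere: a Killing field is determined by its initial data. -/
theorem flat_killing_unique {n : ℕ} (hn : 1 ≤ n)
    (η : Matrix (Fin n) (Fin n) ℝ) (hηsym : η.IsSymm) (hηinv : IsUnit η.det)
    (K K' : (Fin n → ℝ) → (Fin n → ℝ))
    (hK : ContDiff ℝ (⊤ : ℕ∞) K) (hK' : ContDiff ℝ (⊤ : ℕ∞) K')
    (hKill : ∀ (x : Fin n → ℝ) (a b : Fin n),
      pd a (cov η K b) x + pd b (cov η K a) x = 0)
    (hKill' : ∀ (x : Fin n → ℝ) (a b : Fin n),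
      pd a (cov η K' b) x + pd b (cov η K' a) x = 0)
    (h0 : K 0 = K' 0) (hD : fderiv ℝ K 0 = fderiv ℝ K' 0) :
    K = K' := by
  -- the difference of covariant components
  set u : Fin n → (Fin n → ℝ) → ℝ :=
    fun b y => cov η K b y - cov η K' b y with hu_def
  have hcovK : ∀ b, ContDiff ℝ (⊤ : ℕ∞) (cov η K b) := fun b => contDiff_cov hK b
  have hcovK' : ∀ b, ContDiff ℝ (⊤ : ℕ∞) (cov η K' b) := fun b => contDiff_cov hK' b
  have hu : ∀ b, ContDiff ℝ (⊤ : ℕ∞) (u b) := fun b => (hcovK b).sub (hcovK' b)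
  have hdK : ∀ b, Differentiable ℝ (cov η K b) := fun b => (hcovK b).differentiable (by simp)
  have hdK' : ∀ b, Differentiable ℝ (cov η K' b) := fun b => (hcovK' b).differentiable (by simp)
  -- Killing equation for u
  have hKillU : ∀ (x : Fin n → ℝ) (a b : Fin n), pd a (u b) x + pd b (u a) x = 0 := by
    intro x a b
    have h1 := pd_sub (hdK b) (hdK' b) a x
    have h2 := pd_sub (hdK a) (hdK' a) b x
    have := hKill x a b
    have := hKill' x a b
    simp only [hu_def] at *
    rw [h1, h2]
    linarith
  -- second partials of u vanish, by the cyclic trick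
  have hpdpd : ∀ (a b c : Fin n) (x : Fin n → ℝ), pd a (pd b (u c)) x = 0 := by
    have anti : ∀ (a b c : Fin n) (x : Fin n → ℝ),
        pd a (pd b (u c)) x = - pd a (pd c (u b)) x := by
      intro a b c x
      have h : pd b (u c) = fun y => - pd c (u b) y := by
        funext y
        have := hKillU y b c
        linarith
      rw [h, pd_neg]
    have comm : ∀ (a b c : Fin n) (x : Fin n → ℝ),
        pd a (pd b (u c)) x = pd b (pd a (u c)) x := by
      intro a b c x
      exact pd_comm (hu c) a b x
    intro a b c x
    have e1 : pd a (pd b (u c)) x = - pd a (pd c (u b)) x := anti a b c x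
    have e2 : pd a (pd c (u b)) x = pd c (pd a (u b)) x := comm a c b x
    have e3 : pd c (pd a (u b)) x = - pd c (pd b (u a)) x := anti c a b x
    have e4 : pd c (pd b (u a)) x = pd b (pd c (u a)) x := comm c b a x
    have e5 : pd b (pd c (u a)) x = - pd b (pd a (u c)) x := anti b c a x
    have e6 : pd b (pd a (u c)) x = pd a (pd b (u c)) x := comm b a c x
    linarith
  -- hence each first partial pd b (u c) is constant
  have hfderiv_pd_zero : ∀ (b c : Fin n) (x : Fin n → ℝ),
      fderiv ℝ (pd b (u c)) x = 0 := by
    intro b c x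
    exact clm_eq_zero_of_single (fun a => hpdpd a b c x)
  -- the fderiv of u c at 0 is 0
  have hfderivU0 : ∀ c, fderiv ℝ (u c) 0 = 0 := by
    intro c
    have : fderiv ℝ (u c) 0 = fderiv ℝ (cov η K c) 0 - fderiv ℝ (cov η K' c) 0 := by
      exact fderiv_fun_sub (hdK c 0) (hdK' c 0)
    rw [this, fderiv_cov hK c 0, fderiv_cov hK' c 0, hD, sub_self]
  -- so pd b (u c) = 0 everywhere
  have hpdU : ∀ (b c : Fin n) (x : Fin n → ℝ), pd b (u c) x = 0 := by
    intro b c x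
    have hdiff : Differentiable ℝ (pd b (u c)) :=
      (contDiff_pd (hu c) b).differentiable (by simp)
    have hconst : pd b (u c) x = pd b (u c) 0 :=
      is_const_of_fderiv_eq_zero hdiff (hfderiv_pd_zero b c) x 0
    rw [hconst]
    show fderiv ℝ (u c) 0 (Pi.single b 1) = 0
    rw [hfderivU0 c]
    rfl
  -- so u c is constant, and equals its value 0 at the origin
  have hU : ∀ (c : Fin n) (x : Fin n → ℝ), u c x = 0 := by
    intro c x
    have hdiff : Differentiable ℝ (u c) := (hu c).differentiable (by simp)
    have hfz : ∀ y, fderiv ℝ (u c) y = 0 := by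
      intro y
      exact clm_eq_zero_of_single (fun b => hpdU b c y)
    have hconst : u c x = u c 0 := is_const_of_fderiv_eq_zero hdiff hfz x 0
    rw [hconst]
    simp [hu_def, cov, h0]
  -- conclude K = K' using invertibility of η
  funext x
  have hv : η.mulVec (fun c => K x c - K' x c) = 0 := by
    funext b
    have := hU b x
    simp only [hu_def, cov] at this
    simp [Matrix.mulVec, dotProduct, mul_sub, Finset.sum_sub_distrib]
    linarith
  have hv0 : (fun c => K x c - K' x c) = (0 : Fin n → ℝ) := by
    calc (fun c => K x c - K' x c)
        = (1 : Matrix (Fin n) (Fin n) ℝ).mulVec (fun c => K x c - K' x c) := by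
          rw [Matrix.one_mulVec]
      _ = (η⁻¹ * η).mulVec (fun c => K x c - K' x c) := by
          rw [Matrix.nonsing_inv_mul η hηinv]
      _ = η⁻¹.mulVec (η.mulVec (fun c => K x c - K' x c)) := by
          rw [Matrix.mulVec_mulVec]
      _ = 0 := by rw [hv, Matrix.mulVec_zero]
  funext c
  have := congrFun hv0 c
  simp at this
  linarith
end

section
/- Let K : ℝⁿ → ℝⁿ and ω : ℝⁿ → ℝⁿ be smooth (K a vector field with components K^a, ω a covector field with components ω_a). Define the Lie derivatives (𝓛_K ω)_a := Σ_c K^c ∂_c ω_a + Σ_c ω_c ∂_a K^c, and for the (0,2)-tensor field T_{ba} := ∂_b ω_a, (𝓛_K T)_{ba} := Σ_c K^c ∂_c T_{ba} + Σ_c T_{ca} ∂_b K^c + Σ_c T_{bc} ∂_a K^c. Let h_{ab} := ∂_a K_b + ∂_b K_a with K_b := Σ_c η_{bc} K^c, and define [∂h]_a{}^e{}_b := (1/2) Σ_f η^{ef} (∂_a h_{fb} + ∂_b h_{af} − ∂_f h_{ab}). Then at every point and for all indices a, b: (𝓛_K (∂ω))_{ba} = ∂_b ((𝓛_K ω)_a)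 − Σ_e ω_e [∂h]_a{}^e{}_b. (This is the paper's commutation relation (3.8) between 𝓛_K and ∇_b for a (0,1)-tensor field, specialized to the flat connection ∇ = ∂.) -/
/-- Lie derivative of a covector field: `(𝓛_K ω)_a := Σ_c K^c ∂_c ω_a + Σ_c ω_c ∂_a K^c`. -/
noncomputable def lieCov {n : ℕ} (K ω : (Fin n → ℝ) → (Fin n → ℝ)) (a : Fin n) :
    (Fin n → ℝ) → ℝ :=
  fun x => (∑ c, K x c * pd c (fun y => ω y a) x) + ∑ c, ω x c * pd a (fun y => K y c) x

/-- Lie derivative of a (0,2)-tensor field `T`: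
`(𝓛_K T)_{ba} := Σ_c K^c ∂_c T_{ba} + Σ_c T_{ca} ∂_b K^c + Σ_c T_{bc} ∂_a K^c`. -/
noncomputable def lieT2 {n : ℕ} (K : (Fin n → ℝ) → (Fin n → ℝ))
    (T : Fin n → Fin n → (Fin n → ℝ) → ℝ) (b a : Fin n) : (Fin n → ℝ) → ℝ :=
  fun x => (∑ c, K x c * pd c (T b a) x) + (∑ c, T c a x * pd b (fun y => K y c) x)
    + ∑ c, T b c x * pd a (fun y => K y c) x

/-- `h_{ab} := ∂_a K_b + ∂_b K_a`, the flat Lie derivative of the constant metric η. -/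
noncomputable def lieMetric {n : ℕ} (η : Matrix (Fin n) (Fin n) ℝ)
    (K : (Fin n → ℝ) → (Fin n → ℝ)) (a b : Fin n) : (Fin n → ℝ) → ℝ :=
  fun x => pd a (cov η K b) x + pd b (cov η K a) x

/-- `[∂h]_a{}^e{}_b := (1/2) Σ_f η^{ef} (∂_a h_{fb} + ∂_b h_{af} − ∂_f h_{ab})`. -/
noncomputable def dh {n : ℕ} (η : Matrix (Fin n) (Fin n) ℝ)
    (K : (Fin n → ℝ) → (Fin n → ℝ)) (a e b : Fin n) : (Fin n → ℝ) → ℝ :=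
  fun x => (1 / 2) * ∑ f, η⁻¹ e f *
    (pd a (lieMetric η K f b) x + pd b (lieMetric η K a f) x - pd f (lieMetric η K a b) x)

section Helpers
variable {n : ℕ}


lemma contDiff_pd {u : (Fin n → ℝ) → ℝ} (hu : ContDiff ℝ (⊤ : ℕ∞) u) (a : Fin n) :
    ContDiff ℝ (⊤ : ℕ∞) (pd a u) :=
  (ContinuousLinearMap.apply ℝ ℝ (Pi.single a 1 : Fin n → ℝ)).contDiff.comp
    (hu.fderiv_right (by simp))

lemma pd_add {u v : (Fin n → ℝ) → ℝ} {x : Fin n → ℝ} (a : Fin n)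
    (hu : DifferentiableAt ℝ u x) (hv : DifferentiableAt ℝ v x) :
    pd a (fun y => u y + v y) x = pd a u x + pd a v x := by
  unfold pd; rw [fderiv_fun_add hu hv]; simp

lemma pd_mul {u v : (Fin n → ℝ) → ℝ} {x : Fin n → ℝ} (a : Fin n)
    (hu : DifferentiableAt ℝ u x) (hv : DifferentiableAt ℝ v x) :
    pd a (fun y => u y * v y) x = u x * pd a v x + v x * pd a u x := by
  unfold pd; rw [fderiv_fun_mul hu hv]; simp

lemma pd_sum {ι : Type*} (s : Finset ι) (f : ι → (Fin n → ℝ) → ℝ) {x : Fin n → ℝ} (a : Fin n)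
    (hf : ∀ i ∈ s, DifferentiableAt ℝ (f i) x) :
    pd a (fun y => ∑ i ∈ s, f i y) x = ∑ i ∈ s, pd a (f i) x := by
  unfold pd; rw [fderiv_fun_sum hf]; simp

lemma pd_const_mul (r : ℝ) {u : (Fin n → ℝ) → ℝ} {x : Fin n → ℝ} (a : Fin n)
    (hu : DifferentiableAt ℝ u x) :
    pd a (fun y => r * u y) x = r * pd a u x := by
  unfold pd; rw [fderiv_const_mul hu]; simp

lemma pd_comm {u : (Fin n → ℝ) → ℝ} (hu : ContDiff ℝ (⊤ : ℕ∞) u) (a b : Fin n) (x : Fin n → ℝ) :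
    pd a (pd b u) x = pd b (pd a u) x := by
  have hd : Differentiable ℝ u := hu.differentiable (by simp)
  have h2 : ContDiff ℝ (⊤ : ℕ∞) (fderiv ℝ u) := hu.fderiv_right (by simp)
  have hx : HasFDerivAt (fderiv ℝ u) (fderiv ℝ (fderiv ℝ u) x) x :=
    (h2.differentiable (by simp) x).hasFDerivAt
  have hpd : ∀ (v w : Fin n → ℝ),
      fderiv ℝ (fun y => fderiv ℝ u y w) x v = fderiv ℝ (fderiv ℝ u) x v w := by
    intro v w
    have h : HasFDerivAt (fun y => fderiv ℝ u y w)
        ((ContinuousLinearMap.apply ℝ ℝ w).comp (fderiv ℝ (fderiv ℝ u) x)) x :=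
      (ContinuousLinearMap.apply ℝ ℝ w).hasFDerivAt.comp x hx
    rw [h.fderiv]; rfl
  show fderiv ℝ (fun y => fderiv ℝ u y (Pi.single b 1)) x (Pi.single a 1) =
    fderiv ℝ (fun y => fderiv ℝ u y (Pi.single a 1)) x (Pi.single b 1)
  rw [hpd, hpd]
  exact second_derivative_symmetric (fun y => (hd y).hasFDerivAt) hx _ _

lemma dh_eq (η : Matrix (Fin n) (Fin n) ℝ) (hηinv : IsUnit η.det)
    (K : (Fin n → ℝ) → (Fin n → ℝ)) (hK : ContDiff ℝ (⊤ : ℕ∞) K) (a e b : Fin n) (x : Fin n → ℝ) :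
    dh η K a e b x = pd a (pd b (fun y => K y e)) x := by
  have hKc : ∀ c, ContDiff ℝ (⊤ : ℕ∞) (fun y => K y c) := fun c => contDiff_pi.1 hK c
  have hcov : ∀ f, ContDiff ℝ (⊤ : ℕ∞) (cov η K f) :=
    fun f => ContDiff.sum fun c _ => contDiff_const.mul (hKc c)
  have hdcov : ∀ f g, Differentiable ℝ (pd f (cov η K g)) :=
    fun f g => (contDiff_pd (hcov g) f).differentiable (by simp)
  have pdLM : ∀ (c f g : Fin n) (y : Fin n → ℝ), pd c (lieMetric η K f g) y =
      pd c (pd f (cov η K g)) y + pd c (pd g (cov η K f)) y := by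
    intro c f g y
    exact pd_add c (hdcov f g y) (hdcov g f y)
  have key : dh η K a e b x = ∑ f, η⁻¹ e f * pd a (pd b (cov η K f)) x := by
    unfold dh
    rw [Finset.mul_sum]
    refine Finset.sum_congr rfl fun f _ => ?_
    rw [pdLM, pdLM, pdLM]
    rw [pd_comm (hcov b) a f, pd_comm (hcov a) b f, pd_comm (hcov f) b a]
    ring
  rw [key]
  have pdcov : ∀ f, pd b (cov η K f) = fun y => ∑ c, η f c * pd b (fun z => K z c) y := by
    intro f
    funext y
    unfold cov
    rw [pd_sum Finset.univ _ b fun c _ =>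
      (contDiff_const.mul (hKc c)).differentiable (by simp) y]
    exact Finset.sum_congr rfl fun c _ =>
      pd_const_mul _ b ((hKc c).differentiable (by simp) y)
  have hdpdK : ∀ c, Differentiable ℝ (pd b (fun z => K z c)) :=
    fun c => (contDiff_pd (hKc c) b).differentiable (by simp)
  have step : ∀ f : Fin n, pd a (pd b (cov η K f)) x
      = ∑ c, η f c * pd a (pd b (fun z => K z c)) x := by
    intro f
    rw [pdcov f, pd_sum Finset.univ _ a
      (fun c _ => (contDiff_const.mul (contDiff_pd (hKc c) b)).differentiable (by simp) x)]
    exact Finset.sum_congr rfl fun c _ => pd_const_mul _ a (hdpdK c x)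
  simp_rw [step, Finset.mul_sum]
  rw [Finset.sum_comm]
  have h1 : η⁻¹ * η = 1 := Matrix.nonsing_inv_mul η hηinv
  calc ∑ c, ∑ f, η⁻¹ e f * (η f c * pd a (pd b (fun z => K z c)) x)
      = ∑ c, (η⁻¹ * η) e c * pd a (pd b (fun z => K z c)) x := by
        refine Finset.sum_congr rfl fun c _ => ?_
        rw [Matrix.mul_apply, Finset.sum_mul]
        exact Finset.sum_congr rfl fun f _ => by ring
    _ = pd a (pd b (fun y => K y e)) x := by
        rw [h1]; simp [Matrix.one_apply]

end Helpers

/-- The flat-space commutation relation of `𝓛_K` and `∂_b` on a covector field `ω`: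
`(𝓛_K (∂ω))_{ba} = ∂_b ((𝓛_K ω)_a) − Σ_e ω_e [∂h]_a{}^e{}_b`. -/
theorem lie_partial_commutation {n : ℕ} (hn : 1 ≤ n)
    (η : Matrix (Fin n) (Fin n) ℝ) (hηsym : η.IsSymm) (hηinv : IsUnit η.det)
    (K ω : (Fin n → ℝ) → (Fin n → ℝ))
    (hK : ContDiff ℝ (⊤ : ℕ∞) K) (hω : ContDiff ℝ (⊤ : ℕ∞) ω) :
    ∀ (x : Fin n → ℝ) (a b : Fin n),
      lieT2 K (fun b' a' => pd b' (fun y => ω y a')) b a x =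
        pd b (lieCov K ω a) x - ∑ e, ω x e * dh η K a e b x := by
  intro x a b
  have hKc : ∀ c, ContDiff ℝ (⊤ : ℕ∞) (fun y => K y c) := fun c => contDiff_pi.1 hK c
  have hωc : ∀ c, ContDiff ℝ (⊤ : ℕ∞) (fun y => ω y c) := fun c => contDiff_pi.1 hω c
  have dK : ∀ (c : Fin n) y, DifferentiableAt ℝ (fun z => K z c) y :=
    fun c y => (hKc c).differentiable (by simp) y
  have dω : ∀ (c : Fin n) y, DifferentiableAt ℝ (fun z => ω z c) y :=
    fun c y => (hωc c).differentiable (by simp) y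
  have dpdK : ∀ (c d : Fin n) y, DifferentiableAt ℝ (pd d (fun z => K z c)) y :=
    fun c d y => (contDiff_pd (hKc c) d).differentiable (by simp) y
  have dpdω : ∀ (c d : Fin n) y, DifferentiableAt ℝ (pd d (fun z => ω z c)) y :=
    fun c d y => (contDiff_pd (hωc c) d).differentiable (by simp) y
  have hdh : ∀ e, dh η K a e b x = pd b (pd a (fun y => K y e)) x := by
    intro e
    rw [dh_eq η hηinv K hK a e b x, pd_comm (hKc e) a b x]
  have hlie : pd b (lieCov K ω a) x =
      (∑ c, (K x c * pd b (pd c (fun y => ω y a)) x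
        + pd c (fun y => ω y a) x * pd b (fun y => K y c) x))
    + ∑ c, (ω x c * pd b (pd a (fun y => K y c)) x
        + pd a (fun y => K y c) x * pd b (fun y => ω y c) x) := by
    unfold lieCov
    rw [pd_add b
      (DifferentiableAt.fun_sum fun c _ => (dK c x).fun_mul (dpdω a c x))
      (DifferentiableAt.fun_sum fun c _ => (dω c x).fun_mul (dpdK c a x))]
    rw [pd_sum Finset.univ _ b (fun c _ => (dK c x).fun_mul (dpdω a c x)),
        pd_sum Finset.univ _ b (fun c _ => (dω c x).fun_mul (dpdK c a x))]
    congr 1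
    · exact Finset.sum_congr rfl fun c _ => pd_mul b (dK c x) (dpdω a c x)
    · exact Finset.sum_congr rfl fun c _ => pd_mul b (dω c x) (dpdK c a x)
  have hT : lieT2 K (fun b' a' => pd b' (fun y => ω y a')) b a x =
      (∑ c, K x c * pd b (pd c (fun y => ω y a)) x)
    + (∑ c, pd c (fun y => ω y a) x * pd b (fun y => K y c) x)
    + ∑ c, pd b (fun y => ω y c) x * pd a (fun y => K y c) x := by
    unfold lieT2
    congr 1
    congr 1
    exact Finset.sum_congr rfl fun c _ => by rw [pd_comm (hωc a) c b x]
  rw [hT, hlie]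
  simp_rw [hdh]
  rw [Finset.sum_add_distrib, Finset.sum_add_distrib]
  have hcomm : ∑ c, pd a (fun y => K y c) x * pd b (fun y => ω y c) x
      = ∑ c, pd b (fun y => ω y c) x * pd a (fun y => K y c) x :=
    Finset.sum_congr rfl fun c _ => mul_comm _ _
  rw [hcomm]
  ring
end
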